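/- Let p be a probability measure on ℝ^d with finite second moment and Ω = supp(p). For every x ∈ ℝ^d not in the medial axis Σ_Ω, the posterior measure p(· | X_σ = x) converges to the Dirac mass δ_{proj_Ω(x)} in the 2-Wasserstein distance as σ → 0, i.e., lim_{σ→0} d_{W,2}(p(· | X_σ = x), δ_{proj_Ω(x)}) = 0. -/

import Mathlib

open MeasureTheory Metric Filter
open scoped ENNReal

/-- The `s`-Wasserstein distance (valued in `[0,∞]`), defined as the infimum over all
couplings `π` of `μ` and `ν` of the `L^s(π)`-norm of `(x, y) ↦ x - y`
(for `s = ∞` this is the essential supremum). -/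
noncomputable def wassersteinDist {E : Type*} [MeasurableSpace E] [NormedAddCommGroup E]
    (s : ℝ≥0∞) (μ ν : Measure E) : ℝ≥0∞ :=
  ⨅ π ∈ {π : Measure (E × E) | π.map Prod.fst = μ ∧ π.map Prod.snd = ν},
    eLpNorm (fun z : E × E => z.1 - z.2) s π

/-- The (topological) support of a measure on a metric space: points all of whose balls
have positive measure. -/
def msupport {E : Type*} [MeasurableSpace E] [PseudoMetricSpace E] (p : Measure E) :
    Set E := {y | ∀ r : ℝ, 0 < r → 0 < p (Metric.ball y r)}

/-- The posterior measure `p(· | X_σ = x)`, with density proportional to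
`exp(-‖x - y‖²/(2σ²))` with respect to `p` (normalized). -/
noncomputable def posterior {d : ℕ} (p : Measure (EuclideanSpace ℝ (Fin d))) (σ : ℝ)
    (x : EuclideanSpace ℝ (Fin d)) : Measure (EuclideanSpace ℝ (Fin d)) :=
  p.withDensity fun y => ENNReal.ofReal
    (Real.exp (-‖x - y‖ ^ 2 / (2 * σ ^ 2)) /
      ∫ y', Real.exp (-‖x - y'‖ ^ 2 / (2 * σ ^ 2)) ∂p)

lemma msupport_closed {E : Type*} [MeasurableSpace E] [PseudoMetricSpace E] (p : Measure E) :
    IsClosed (msupport p) := by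
  rw [← isOpen_compl_iff, isOpen_iff_mem_nhds]
  intro y hy
  simp only [msupport, Set.mem_compl_iff, Set.mem_setOf_eq, not_forall] at hy
  push_neg at hy
  obtain ⟨r, hr, hball⟩ := hy
  rw [Metric.mem_nhds_iff]
  refine ⟨r/2, by linarith, fun z hz => ?_⟩
  simp only [msupport, Set.mem_compl_iff, Set.mem_setOf_eq]
  push_neg
  refine ⟨r/2, by linarith, ?_⟩
  have : Metric.ball z (r/2) ⊆ Metric.ball y r := by
    intro w hw
    have := mem_ball.1 hw
    have := mem_ball.1 hz
    rw [mem_ball]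
    calc dist w y ≤ dist w z + dist z y := dist_triangle _ _ _
      _ < r/2 + r/2 := by linarith
      _ = r := by ring
  exact le_trans (measure_mono this) hball

lemma measure_compl_msupport {d : ℕ} (p : Measure (EuclideanSpace ℝ (Fin d))) :
    p (msupport p)ᶜ = 0 := by
  have key : ∀ y : ((msupport p)ᶜ : Set (EuclideanSpace ℝ (Fin d))), ∃ r : ℝ, 0 < r ∧ p (Metric.ball y.1 r) = 0 := by
    rintro ⟨y, hy⟩
    simp only [msupport, Set.mem_compl_iff, Set.mem_setOf_eq] at hy
    push_neg at hy
    obtain ⟨r, hr, h0⟩ := hy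
    exact ⟨r, hr, le_antisymm h0 zero_le⟩
  choose r hr hr0 using key
  obtain ⟨T, hTc, hTU⟩ := TopologicalSpace.isOpen_iUnion_countable
    (fun y : ((msupport p)ᶜ : Set (EuclideanSpace ℝ (Fin d))) => Metric.ball y.1 (r y)) (fun y => Metric.isOpen_ball)
  have hsub : (msupport p)ᶜ ⊆ ⋃ y ∈ T, Metric.ball y.1 (r y) := by
    rw [hTU]
    intro z hz
    exact Set.mem_iUnion.2 ⟨⟨z, hz⟩, Metric.mem_ball_self (hr _)⟩
  refine measure_mono_null hsub ?_
  exact (measure_biUnion_null_iff hTc).2 fun y _ => hr0 y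

lemma far_gap {d : ℕ} (p : Measure (EuclideanSpace ℝ (Fin d)))
    (x xΩ : EuclideanSpace ℝ (Fin d))
    (hnear : ∀ y ∈ msupport p, dist x xΩ ≤ dist x y)
    (huniq : ∀ w, w ∈ msupport p → (∀ y ∈ msupport p, dist x w ≤ dist x y) → w = xΩ)
    {ε : ℝ} (hε : 0 < ε) :
    ∃ δ > 0, ∀ y ∈ msupport p, ε ≤ dist y xΩ → dist x xΩ ^ 2 + δ ≤ dist x y ^ 2 := by
  set R := dist x xΩ with hR
  have hR0 : 0 ≤ R := dist_nonneg
  set K : Set (EuclideanSpace ℝ (Fin d)) :=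
    (msupport p ∩ {y | ε ≤ dist y xΩ}) ∩ closedBall x (R + 1) with hK
  have hKclosed : IsClosed (msupport p ∩ {y | ε ≤ dist y xΩ}) :=
    (msupport_closed p).inter (isClosed_le continuous_const (continuous_id.dist continuous_const))
  have hKcompact : IsCompact K := (isCompact_closedBall x (R + 1)).inter_left hKclosed
  rcases K.eq_empty_or_nonempty with hKe | hKne
  · refine ⟨2 * R + 1, by linarith, fun y hy hyε => ?_⟩
    have hyK : y ∉ K := hKe ▸ Set.notMem_empty y
    have : ¬ dist x y ≤ R + 1 := by
      intro h
      exact hyK ⟨⟨hy, hyε⟩, by rwa [mem_closedBall, dist_comm]⟩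
    push_neg at this
    nlinarith [dist_nonneg (x := x) (y := y)]
  · obtain ⟨y₀, hy₀K, hy₀min⟩ := hKcompact.exists_isMinOn hKne
      (Continuous.continuousOn (continuous_const.dist continuous_id))
    have hy₀supp : y₀ ∈ msupport p := hy₀K.1.1
    have hy₀far : ε ≤ dist y₀ xΩ := hy₀K.1.2
    have hm : R < dist x y₀ := by
      rcases lt_or_eq_of_le (hnear y₀ hy₀supp) with h | h
      · exact h
      · exfalso
        have : y₀ = xΩ := huniq y₀ hy₀supp (fun y hy => h ▸ hnear y hy)
        rw [this, dist_self] at hy₀far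
        linarith
    refine ⟨min (dist x y₀ ^ 2 - R ^ 2) (2 * R + 1), ?_, fun y hy hyε => ?_⟩
    · apply lt_min
      · nlinarith
      · linarith
    · rcases le_or_gt (dist x y) (R + 1) with h | h
      · have hyK : y ∈ K := ⟨⟨hy, hyε⟩, by rwa [mem_closedBall, dist_comm]⟩
        have := hy₀min hyK
        simp only [Set.mem_setOf_eq] at this
        have h2 : dist x y₀ ≤ dist x y := this
        have := min_le_left (dist x y₀ ^ 2 - R ^ 2) (2 * R + 1)
        nlinarith [dist_nonneg (x := x) (y := y₀)]
      · have := min_le_right (dist x y₀ ^ 2 - R ^ 2) (2 * R + 1)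
        nlinarith [dist_nonneg (x := x) (y := y)]

lemma exp_limit_aux {t : ℝ} (ht : 0 < t) :
    Tendsto (fun σ : ℝ => Real.exp (-(t / (2 * σ ^ 2)))) (nhdsWithin 0 (Set.Ioi 0)) (nhds 0) := by
  have h1 : Tendsto (fun σ : ℝ => 2 * σ ^ 2) (nhdsWithin 0 (Set.Ioi 0))
      (nhdsWithin 0 (Set.Ioi 0)) := by
    rw [tendsto_nhdsWithin_iff]
    constructor
    · have h : Tendsto (fun σ : ℝ => 2 * σ ^ 2) (nhds 0) (nhds (2 * 0 ^ 2)) :=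
        (Continuous.tendsto (by continuity) 0)
      simpa using h.mono_left nhdsWithin_le_nhds
    · filter_upwards [self_mem_nhdsWithin] with σ hσ
      have : (0:ℝ) < σ := hσ
      exact Set.mem_Ioi.2 (by positivity)
  have h2 : Tendsto (fun σ : ℝ => (2 * σ ^ 2)⁻¹) (nhdsWithin 0 (Set.Ioi 0)) atTop :=
    tendsto_inv_nhdsGT_zero.comp h1
  have h3 : Tendsto (fun σ : ℝ => t / (2 * σ ^ 2)) (nhdsWithin 0 (Set.Ioi 0)) atTop := by
    simpa [div_eq_mul_inv] using h2.const_mul_atTop ht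
  exact Real.tendsto_exp_neg_atTop_nhds_zero.comp h3

lemma aux_f_cont {d : ℕ} (x : EuclideanSpace ℝ (Fin d)) (σ : ℝ) :
    Continuous (fun y : EuclideanSpace ℝ (Fin d) =>
      Real.exp (-‖x - y‖ ^ 2 / (2 * σ ^ 2))) :=
  Real.continuous_exp.comp
    ((((continuous_const.sub continuous_id).norm.pow 2).neg).div_const _)

lemma aux_f_int {d : ℕ} (p : Measure (EuclideanSpace ℝ (Fin d))) [IsProbabilityMeasure p]
    (x : EuclideanSpace ℝ (Fin d)) (σ : ℝ) :
    Integrable (fun y => Real.exp (-‖x - y‖ ^ 2 / (2 * σ ^ 2))) p := by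
  refine (integrable_const (1:ℝ)).mono' (aux_f_cont x σ).aestronglyMeasurable ?_
  filter_upwards with y
  rw [Real.norm_eq_abs, abs_of_pos (Real.exp_pos _)]
  apply Real.exp_le_one_iff.2
  apply div_nonpos_of_nonpos_of_nonneg
  · exact neg_nonpos.2 (by positivity)
  · positivity

lemma aux_Z_pos {d : ℕ} (p : Measure (EuclideanSpace ℝ (Fin d))) [IsProbabilityMeasure p]
    (x : EuclideanSpace ℝ (Fin d)) (σ : ℝ) :
    0 < ∫ y', Real.exp (-‖x - y'‖ ^ 2 / (2 * σ ^ 2)) ∂p := by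
  rw [integral_pos_iff_support_of_nonneg (fun y => (Real.exp_pos _).le) (aux_f_int p x σ)]
  have h : Function.support (fun y : EuclideanSpace ℝ (Fin d) =>
      Real.exp (-‖x - y‖ ^ 2 / (2 * σ ^ 2))) = Set.univ := by
    ext y; simp [Function.mem_support, (Real.exp_pos _).ne']
  rw [h]
  simp

lemma aux_W_int {d : ℕ} (p : Measure (EuclideanSpace ℝ (Fin d))) [IsProbabilityMeasure p]
    (xΩ : EuclideanSpace ℝ (Fin d)) (hp2 : Integrable (fun y => ‖y‖ ^ 2) p) :
    Integrable (fun y => ‖y - xΩ‖ ^ 2) p := by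
  refine ((hp2.const_mul 2).add (integrable_const (2 * ‖xΩ‖ ^ 2))).mono'
    ((continuous_id.sub continuous_const).norm.pow 2).aestronglyMeasurable ?_
  filter_upwards with y
  rw [Real.norm_eq_abs, abs_of_nonneg (by positivity)]
  simp only [Pi.add_apply]
  have h1 : ‖y - xΩ‖ ≤ ‖y‖ + ‖xΩ‖ := norm_sub_le _ _
  nlinarith [norm_nonneg (y - xΩ), norm_nonneg y, norm_nonneg xΩ, sq_nonneg (‖y‖ - ‖xΩ‖)]

lemma aux_N_int {d : ℕ} (p : Measure (EuclideanSpace ℝ (Fin d))) [IsProbabilityMeasure p]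
    (x xΩ : EuclideanSpace ℝ (Fin d)) (σ : ℝ) (hp2 : Integrable (fun y => ‖y‖ ^ 2) p) :
    Integrable (fun y => ‖y - xΩ‖ ^ 2 * Real.exp (-‖x - y‖ ^ 2 / (2 * σ ^ 2))) p := by
  refine (aux_W_int p xΩ hp2).mono' (((continuous_id.sub continuous_const).norm.pow 2).mul
    (aux_f_cont x σ)).aestronglyMeasurable ?_
  filter_upwards with y
  rw [Real.norm_eq_abs, abs_of_nonneg (by positivity)]
  have hle : Real.exp (-‖x - y‖ ^ 2 / (2 * σ ^ 2)) ≤ 1 := by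
    apply Real.exp_le_one_iff.2
    apply div_nonpos_of_nonpos_of_nonneg
    · exact neg_nonpos.2 (by positivity)
    · positivity
  nlinarith [Real.exp_pos (-‖x - y‖ ^ 2 / (2 * σ ^ 2)), norm_nonneg (y - xΩ),
    sq_nonneg ‖y - xΩ‖]

set_option maxHeartbeats 1000000 in
lemma main_tendsto {d : ℕ} (p : Measure (EuclideanSpace ℝ (Fin d))) [IsProbabilityMeasure p]
    (hp2 : Integrable (fun y => ‖y‖ ^ 2) p)
    (x xΩ : EuclideanSpace ℝ (Fin d))
    (hxΩ : xΩ ∈ msupport p) (hnear : ∀ y ∈ msupport p, dist x xΩ ≤ dist x y)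
    (huniq : ∀ w, w ∈ msupport p → (∀ y ∈ msupport p, dist x w ≤ dist x y) → w = xΩ) :
    Tendsto (fun σ : ℝ => ∫ y, ‖y - xΩ‖ ^ 2 * (Real.exp (-‖x - y‖ ^ 2 / (2 * σ ^ 2)) /
      ∫ y', Real.exp (-‖x - y'‖ ^ 2 / (2 * σ ^ 2)) ∂p) ∂p)
      (nhdsWithin 0 (Set.Ioi 0)) (nhds 0) := by
  -- notation
  set f : ℝ → EuclideanSpace ℝ (Fin d) → ℝ :=
    fun σ y => Real.exp (-‖x - y‖ ^ 2 / (2 * σ ^ 2)) with hf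
  set Z : ℝ → ℝ := fun σ => ∫ y', f σ y' ∂p with hZ
  have hfcont : ∀ σ : ℝ, Continuous (f σ) := by
    intro σ
    exact Real.continuous_exp.comp
      ((((continuous_const.sub continuous_id).norm.pow 2).neg).div_const _)
  have hfpos : ∀ σ y, 0 < f σ y := fun σ y => Real.exp_pos _
  have hfle1 : ∀ σ y, f σ y ≤ 1 := by
    intro σ y
    apply Real.exp_le_one_iff.2
    apply div_nonpos_of_nonpos_of_nonneg
    · exact neg_nonpos.2 (by positivity)
    · positivity
  have hfint : ∀ σ : ℝ, Integrable (f σ) p := by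
    intro σ
    refine (integrable_const (1:ℝ)).mono' ((hfcont σ).aestronglyMeasurable) ?_
    filter_upwards with y
    rw [Real.norm_eq_abs, abs_of_pos (hfpos σ y)]
    exact hfle1 σ y
  have hW : Integrable (fun y => ‖y - xΩ‖ ^ 2) p := by
    refine ((hp2.const_mul 2).add (integrable_const (2 * ‖xΩ‖ ^ 2))).mono'
      ?_ ?_
    · exact ((continuous_id.sub continuous_const).norm.pow 2).aestronglyMeasurable
    · filter_upwards with y
      rw [Real.norm_eq_abs, abs_of_nonneg (by positivity)]
      simp only [Pi.add_apply]
      have h1 : ‖y - xΩ‖ ≤ ‖y‖ + ‖xΩ‖ := norm_sub_le _ _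
      nlinarith [norm_nonneg (y - xΩ), norm_nonneg y, norm_nonneg xΩ, sq_nonneg (‖y‖ - ‖xΩ‖)]
  have hNint : ∀ σ : ℝ, Integrable (fun y => ‖y - xΩ‖ ^ 2 * f σ y) p := by
    intro σ
    refine hW.mono' (((continuous_id.sub continuous_const).norm.pow 2).mul
      (hfcont σ)).aestronglyMeasurable ?_
    filter_upwards with y
    rw [Real.norm_eq_abs, abs_of_nonneg (by positivity)]
    nlinarith [hfle1 σ y, hfpos σ y, norm_nonneg (y - xΩ), sq_nonneg ‖y - xΩ‖]
  have hZpos : ∀ σ : ℝ, 0 < Z σ := by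
    intro σ
    rw [hZ]
    rw [integral_pos_iff_support_of_nonneg (fun y => (hfpos σ y).le) (hfint σ)]
    have : Function.support (f σ) = Set.univ := by
      ext y; simp [Function.mem_support, (hfpos σ y).ne']
    rw [this]
    simp
  -- main epsilon argument
  rw [NormedAddCommGroup.tendsto_nhds_zero]
  intro ε hε
  set ε₀ := Real.sqrt (ε / 2) with hε₀def
  have hε₀ : 0 < ε₀ := Real.sqrt_pos.2 (by linarith)
  have hε₀sq : ε₀ ^ 2 = ε / 2 := Real.sq_sqrt (by linarith)
  obtain ⟨δ, hδ, hgap⟩ := far_gap p x xΩ hnear huniq hε₀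
  set R := dist x xΩ with hRdef
  have hR0 : 0 ≤ R := dist_nonneg
  set η := min 1 (δ / (2 * (2 * R + 1))) with hηdef
  have hη : 0 < η := lt_min one_pos (by positivity)
  have hη2 : (R + η) ^ 2 ≤ R ^ 2 + δ / 2 := by
    have h1 : η ≤ 1 := min_le_left _ _
    have h2 : η ≤ δ / (2 * (2 * R + 1)) := min_le_right _ _
    have h3 : η * (2 * (2 * R + 1)) ≤ δ := by
      rw [← le_div_iff₀ (by positivity)]; exact h2
    nlinarith
  set β := (p (Metric.ball xΩ η)).toReal with hβdef
  have hβ : 0 < β := ENNReal.toReal_pos (hxΩ η hη).ne' (measure_ne_top p _)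
  set near : Set (EuclideanSpace ℝ (Fin d)) := {y | dist y xΩ < ε₀} with hneardef
  have hnearmeas : MeasurableSet near :=
    (isOpen_lt (continuous_id.dist continuous_const) continuous_const).measurableSet
  set S : Set (EuclideanSpace ℝ (Fin d)) := msupport p ∩ nearᶜ with hSdef
  have hSmeas : MeasurableSet S :=
    (msupport_closed p).measurableSet.inter hnearmeas.compl
  have hgap' : ∀ y ∈ S, R ^ 2 + δ ≤ ‖x - y‖ ^ 2 := by
    intro y hy
    have h1 : ε₀ ≤ dist y xΩ := not_lt.1 hy.2
    have := hgap y hy.1 h1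
    rwa [dist_eq_norm] at this
  set c : ℝ → ℝ := fun σ => Real.exp (-((R ^ 2 + δ / 2) / (2 * σ ^ 2))) with hcdef
  set F : ℝ → ℝ := fun σ =>
    ∫ y in S, ‖y - xΩ‖ ^ 2 *
      Real.exp (-((‖x - y‖ ^ 2 - (R ^ 2 + δ / 2)) / (2 * σ ^ 2))) ∂p with hFdef
  -- F tends to 0 by dominated convergence
  have hFlim : Tendsto F (nhdsWithin 0 (Set.Ioi 0)) (nhds 0) := by
    have hdct := tendsto_integral_filter_of_dominated_convergence
      (μ := p.restrict S) (l := nhdsWithin (0:ℝ) (Set.Ioi 0))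
      (F := fun σ y => ‖y - xΩ‖ ^ 2 *
        Real.exp (-((‖x - y‖ ^ 2 - (R ^ 2 + δ / 2)) / (2 * σ ^ 2))))
      (f := fun _ => (0:ℝ)) (bound := fun y => ‖y - xΩ‖ ^ 2)
      ?_ ?_ ?_ ?_
    · simpa using hdct
    · filter_upwards with σ
      exact (((continuous_id.sub continuous_const).norm.pow 2).mul
        (Real.continuous_exp.comp
          ((((continuous_const.sub continuous_id).norm.pow 2).sub continuous_const).div_const
            _).neg)).aestronglyMeasurable
    · filter_upwards [self_mem_nhdsWithin] with σ hσ
      have hσ' : (0:ℝ) < σ := hσ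
      apply ae_restrict_of_forall_mem hSmeas
      intro y hy
      rw [Real.norm_eq_abs, abs_of_nonneg (by positivity)]
      have h1 : R ^ 2 + δ ≤ ‖x - y‖ ^ 2 := hgap' y hy
      have h2 : Real.exp (-((‖x - y‖ ^ 2 - (R ^ 2 + δ / 2)) / (2 * σ ^ 2))) ≤ 1 := by
        apply Real.exp_le_one_iff.2
        apply neg_nonpos_of_nonneg
        apply div_nonneg (by linarith) (by positivity)
      nlinarith [sq_nonneg ‖y - xΩ‖, Real.exp_pos (-((‖x - y‖ ^ 2 - (R ^ 2 + δ / 2)) / (2 * σ ^ 2)))]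
    · exact hW.restrict
    · apply ae_restrict_of_forall_mem hSmeas
      intro y hy
      have ht : 0 < ‖x - y‖ ^ 2 - (R ^ 2 + δ / 2) := by
        have := hgap' y hy; linarith
      have := (exp_limit_aux ht).const_mul (‖y - xΩ‖ ^ 2)
      simpa using this
  have hFsmall : ∀ᶠ σ in nhdsWithin (0:ℝ) (Set.Ioi 0), F σ < β * (ε / 2) :=
    hFlim.eventually_lt_const (by positivity)
  filter_upwards [self_mem_nhdsWithin, hFsmall] with σ hσ hFσ
  have hσ' : (0:ℝ) < σ := hσ
  have hcpos : 0 < c σ := Real.exp_pos _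
  -- denominator lower bound
  have hZlb : β * c σ ≤ Z σ := by
    have step1 : β * c σ = ∫ _ in Metric.ball xΩ η, c σ ∂p := by
      rw [setIntegral_const]; simp [hβdef, smul_eq_mul, mul_comm, Measure.real]
    have step2 : (∫ _ in Metric.ball xΩ η, c σ ∂p) ≤ ∫ y in Metric.ball xΩ η, f σ y ∂p := by
      refine setIntegral_mono_on (integrableOn_const measure_ball_lt_top.ne)
        ((hfint σ).integrableOn) measurableSet_ball ?_
      intro y hy
      have h1 : ‖x - y‖ ≤ R + η := by
        rw [← dist_eq_norm]
        calc dist x y ≤ dist x xΩ + dist xΩ y := dist_triangle _ _ _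
          _ ≤ R + η := by
              have := mem_ball.1 hy
              rw [dist_comm] at this
              simp only [hRdef]
              linarith
      have h2 : ‖x - y‖ ^ 2 ≤ R ^ 2 + δ / 2 := by
        nlinarith [norm_nonneg (x - y)]
      apply Real.exp_le_exp.2
      rw [neg_div]
      apply neg_le_neg
      gcongr
    have step3 : (∫ y in Metric.ball xΩ η, f σ y ∂p) ≤ Z σ :=
      setIntegral_le_integral (hfint σ) (Filter.Eventually.of_forall fun y => (hfpos σ y).le)
    linarith
  -- nonnegativity of the integral
  have hE0 : 0 ≤ ∫ y, ‖y - xΩ‖ ^ 2 * (f σ y / Z σ) ∂p :=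
    integral_nonneg fun y => mul_nonneg (by positivity)
      (div_nonneg (hfpos σ y).le (hZpos σ).le)
  have hE : ∫ y, ‖y - xΩ‖ ^ 2 * (f σ y / Z σ) ∂p
      = (∫ y, ‖y - xΩ‖ ^ 2 * f σ y ∂p) / Z σ := by
    simp_rw [← mul_div_assoc]
    rw [integral_div]
  set N := ∫ y, ‖y - xΩ‖ ^ 2 * f σ y ∂p with hNdef
  have hsplit : N = (∫ y in near, ‖y - xΩ‖ ^ 2 * f σ y ∂p)
      + ∫ y in nearᶜ, ‖y - xΩ‖ ^ 2 * f σ y ∂p :=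
    (integral_add_compl hnearmeas (hNint σ)).symm
  have hnearbound : (∫ y in near, ‖y - xΩ‖ ^ 2 * f σ y ∂p) ≤ ε₀ ^ 2 * Z σ := by
    calc (∫ y in near, ‖y - xΩ‖ ^ 2 * f σ y ∂p)
        ≤ ∫ y in near, ε₀ ^ 2 * f σ y ∂p := by
          refine setIntegral_mono_on ((hNint σ).integrableOn)
            (((hfint σ).const_mul _).integrableOn) hnearmeas ?_
          intro y hy
          have hyd : dist y xΩ < ε₀ := hy
          have hnorm : ‖y - xΩ‖ < ε₀ := by rwa [← dist_eq_norm]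
          exact mul_le_mul_of_nonneg_right (by nlinarith [norm_nonneg (y - xΩ)])
            (hfpos σ y).le
      _ = ε₀ ^ 2 * ∫ y in near, f σ y ∂p := integral_const_mul _ _
      _ ≤ ε₀ ^ 2 * Z σ := by
          refine mul_le_mul_of_nonneg_left ?_ (by positivity)
          exact setIntegral_le_integral (hfint σ)
            (Filter.Eventually.of_forall fun y => (hfpos σ y).le)
  have hfarbound : (∫ y in nearᶜ, ‖y - xΩ‖ ^ 2 * f σ y ∂p) = c σ * F σ := by
    have hae : (nearᶜ : Set (EuclideanSpace ℝ (Fin d))) =ᵐ[p] S := by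
      rw [MeasureTheory.ae_eq_set]
      constructor
      · refine measure_mono_null ?_ (measure_compl_msupport p)
        intro y hy
        rcases hy with ⟨hy1, hy2⟩
        intro hsupp
        exact hy2 ⟨hsupp, hy1⟩
      · have hes : S \ nearᶜ = ∅ := Set.diff_eq_empty.2 Set.inter_subset_right
        simp [hes]
    rw [setIntegral_congr_set hae]
    have hpt : ∀ y ∈ S, ‖y - xΩ‖ ^ 2 * f σ y
        = c σ * (‖y - xΩ‖ ^ 2 *
            Real.exp (-((‖x - y‖ ^ 2 - (R ^ 2 + δ / 2)) / (2 * σ ^ 2)))) := by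
      intro y _
      have hkey : c σ * Real.exp (-((‖x - y‖ ^ 2 - (R ^ 2 + δ / 2)) / (2 * σ ^ 2)))
          = Real.exp (-‖x - y‖ ^ 2 / (2 * σ ^ 2)) := by
        rw [hcdef]
        rw [← Real.exp_add]
        congr 1
        field_simp
        ring
      rw [mul_left_comm, hkey]
    rw [setIntegral_congr_fun hSmeas hpt]
    exact integral_const_mul _ _
  have hF0 : 0 ≤ F σ := by
    refine setIntegral_nonneg hSmeas fun y _ => ?_
    positivity
  have hZp := hZpos σ
  have hNlt : N < ε * Z σ := by
    have h4 : c σ * F σ < c σ * (β * (ε / 2)) := mul_lt_mul_of_pos_left hFσ hcpos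
    have h5 : c σ * (β * (ε / 2)) ≤ Z σ * (ε / 2) := by nlinarith [hcpos.le, hZlb]
    have h6 : ε₀ ^ 2 * Z σ = (ε / 2) * Z σ := by rw [hε₀sq]
    linarith [hnearbound, hfarbound, hsplit]
  rw [Real.norm_eq_abs, abs_of_nonneg hE0, hE, div_lt_iff₀ hZp]
  linarith

/-- Let `p` be a probability measure on `ℝ^d` with finite second moment and
support `Ω`.  For every `x` not on the medial axis of `Ω` (encoded: `xΩ` is the unique
nearest point of `Ω` to `x`), the posterior `p(· | X_σ = x)` converges to the Dirac mass at
`proj_Ω(x) = xΩ` in 2-Wasserstein distance as `σ → 0⁺`. -/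
theorem stmt8 {d : ℕ} (p : Measure (EuclideanSpace ℝ (Fin d))) [IsProbabilityMeasure p]
    (hp2 : Integrable (fun y => ‖y‖ ^ 2) p)
    (x xΩ : EuclideanSpace ℝ (Fin d))
    (hxΩ : xΩ ∈ msupport p) (hnear : ∀ y ∈ msupport p, dist x xΩ ≤ dist x y)
    (huniq : ∀ w, w ∈ msupport p → (∀ y ∈ msupport p, dist x w ≤ dist x y) → w = xΩ) :
    Tendsto (fun σ => wassersteinDist 2 (posterior p σ x) (Measure.dirac xΩ))
      (nhdsWithin 0 (Set.Ioi 0)) (nhds 0) := by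
  set E : ℝ → ℝ := fun σ => ∫ y, ‖y - xΩ‖ ^ 2 * (Real.exp (-‖x - y‖ ^ 2 / (2 * σ ^ 2)) /
      ∫ y', Real.exp (-‖x - y'‖ ^ 2 / (2 * σ ^ 2)) ∂p) ∂p with hEdef
  have key : ∀ σ : ℝ, wassersteinDist 2 (posterior p σ x) (Measure.dirac xΩ)
      ≤ ENNReal.ofReal (Real.sqrt (E σ)) := by
    intro σ
    set f : EuclideanSpace ℝ (Fin d) → ℝ :=
      fun y => Real.exp (-‖x - y‖ ^ 2 / (2 * σ ^ 2)) with hfdef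
    set Z : ℝ := ∫ y', f y' ∂p with hZdef
    have hZpos : 0 < Z := aux_Z_pos p x σ
    have hfint : Integrable f p := aux_f_int p x σ
    have hfcont : Continuous f := aux_f_cont x σ
    set g : EuclideanSpace ℝ (Fin d) → ℝ≥0∞ :=
      fun y => ENNReal.ofReal (f y / Z) with hgdef
    have hgmeas : Measurable g := (hfcont.measurable.div_const _).ennreal_ofReal
    have hpost : posterior p σ x = p.withDensity g := rfl
    have hint1 : Integrable (fun y => f y / Z) p := hfint.div_const _
    have hnn1 : 0 ≤ᵐ[p] fun y => f y / Z :=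
      Filter.Eventually.of_forall fun y => div_nonneg (Real.exp_pos _).le hZpos.le
    have hprob : IsProbabilityMeasure (posterior p σ x) := by
      constructor
      rw [hpost, withDensity_apply _ MeasurableSet.univ, Measure.restrict_univ, hgdef]
      rw [← ofReal_integral_eq_lintegral_ofReal hint1 hnn1]
      rw [integral_div, ← hZdef, div_self hZpos.ne', ENNReal.ofReal_one]
    set π : Measure (EuclideanSpace ℝ (Fin d) × EuclideanSpace ℝ (Fin d)) :=
      (posterior p σ x).map (fun y => (y, xΩ)) with hπdef
    have hmapmeas : Measurable fun y : EuclideanSpace ℝ (Fin d) => (y, xΩ) :=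
      measurable_id.prodMk measurable_const
    have hmem : π ∈ {π : Measure (EuclideanSpace ℝ (Fin d) × EuclideanSpace ℝ (Fin d)) |
        π.map Prod.fst = posterior p σ x ∧ π.map Prod.snd = Measure.dirac xΩ} := by
      constructor
      · rw [hπdef, Measure.map_map measurable_fst hmapmeas]
        exact Measure.map_id
      · rw [hπdef, Measure.map_map measurable_snd hmapmeas]
        have : (Prod.snd ∘ fun y : EuclideanSpace ℝ (Fin d) => (y, xΩ))
            = fun _ => xΩ := rfl
        rw [this, Measure.map_const, measure_univ, one_smul]
    have hE0 : 0 ≤ E σ := by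
      rw [hEdef]
      exact integral_nonneg fun y => mul_nonneg (by positivity)
        (div_nonneg (Real.exp_pos _).le hZpos.le)
    calc wassersteinDist 2 (posterior p σ x) (Measure.dirac xΩ)
        ≤ eLpNorm (fun z : EuclideanSpace ℝ (Fin d) × EuclideanSpace ℝ (Fin d) =>
            z.1 - z.2) 2 π := iInf₂_le π hmem
      _ = eLpNorm (fun y => y - xΩ) 2 (posterior p σ x) := by
          rw [hπdef, eLpNorm_map_measure (g := fun z : EuclideanSpace ℝ (Fin d) × EuclideanSpace ℝ (Fin d) => z.1 - z.2)
            ((continuous_fst.sub continuous_snd).aestronglyMeasurable) hmapmeas.aemeasurable]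
          rfl
      _ = (∫⁻ y, (‖y - xΩ‖₊ : ℝ≥0∞) ^ (2:ℝ) ∂(posterior p σ x)) ^ (1/2 : ℝ) := by
          rw [eLpNorm_eq_lintegral_rpow_enorm_toReal two_ne_zero ENNReal.ofNat_ne_top]
          norm_num
          rfl
      _ = (∫⁻ y, (g * fun y => (‖y - xΩ‖₊ : ℝ≥0∞) ^ (2:ℝ)) y ∂p) ^ (1/2:ℝ) := by
          have hm2 : Measurable fun y : EuclideanSpace ℝ (Fin d) =>
              (‖y - xΩ‖₊ : ℝ≥0∞) ^ (2:ℝ) := by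
            apply Measurable.pow_const
            refine Measurable.enorm (f := fun y : EuclideanSpace ℝ (Fin d) => y - xΩ) ?_
            exact measurable_id.sub measurable_const
          rw [hpost, lintegral_withDensity_eq_lintegral_mul p hgmeas hm2]
      _ = (ENNReal.ofReal (E σ)) ^ (1/2:ℝ) := by
          congr 1
          rw [hEdef]
          rw [ofReal_integral_eq_lintegral_ofReal]
          · apply lintegral_congr
            intro y
            simp only [Pi.mul_apply, hgdef]
            rw [ENNReal.ofReal_mul (by positivity : (0:ℝ) ≤ ‖y - xΩ‖ ^ 2)]
            rw [mul_comm]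
            congr 1
            rw [← Real.rpow_natCast ‖y - xΩ‖ 2, ← ENNReal.ofReal_rpow_of_nonneg
              (norm_nonneg _) (by norm_num), ofReal_norm, enorm_eq_nnnorm]
            norm_num
          · have := (aux_N_int p x xΩ σ hp2).div_const Z
            simpa [mul_div_assoc, hfdef] using this
          · exact Filter.Eventually.of_forall fun y => mul_nonneg (by positivity)
              (div_nonneg (Real.exp_pos _).le hZpos.le)
      _ = ENNReal.ofReal (Real.sqrt (E σ)) := by
          rw [ENNReal.ofReal_rpow_of_nonneg hE0 (by norm_num), Real.sqrt_eq_rpow]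
  have hElim : Tendsto E (nhdsWithin 0 (Set.Ioi 0)) (nhds 0) :=
    main_tendsto p hp2 x xΩ hxΩ hnear huniq
  have hsqrt : Tendsto (fun σ => Real.sqrt (E σ)) (nhdsWithin 0 (Set.Ioi 0)) (nhds 0) := by
    have h := (Real.continuous_sqrt.tendsto 0).comp hElim
    simpa [Function.comp_def] using h
  have hup : Tendsto (fun σ => ENNReal.ofReal (Real.sqrt (E σ)))
      (nhdsWithin 0 (Set.Ioi 0)) (nhds 0) := by
    have h := ENNReal.tendsto_ofReal hsqrt
    simpa using h
  exact tendsto_of_tendsto_of_tendsto_of_le_of_le tendsto_const_nhds hup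
    (fun σ => zero_le) key
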